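/- arXiv:2306.11869 — 3 statements merged into one kernel-verified Lean document; each statement's English description precedes it below -/
import Mathlib

section
/- Let B ∈ ℝ^{n×n} be symmetric positive definite and K ∈ ℝ^{n×n} symmetric positive semidefinite, and let S = B⁻¹ + K. Then κ(S) ≤ κ(B)(1 + λₙ(B)λ₁(K)) = κ(B) + λ₁(B)λ₁(K). -/
open Matrix

noncomputable def lam1 {ι : Type*} [Fintype ι] [DecidableEq ι] (A : Matrix ι ι ℝ) : ℝ :=
  sSup (spectrum ℝ A)

noncomputable def lamn {ι : Type*} [Fintype ι] [DecidableEq ι] (A : Matrix ι ι ℝ) : ℝ :=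
  sInf (spectrum ℝ A)

noncomputable def condNum {ι : Type*} [Fintype ι] [DecidableEq ι] (A : Matrix ι ι ℝ) : ℝ :=
  lam1 A / lamn A

section Aux

variable {ι : Type*} [Fintype ι] [DecidableEq ι]

/-- Conjugation of a diagonal matrix by a unitary is PSD iff diagonal entries nonneg. -/
lemma conj_diag_posSemidef_iff {U : Matrix ι ι ℝ} (hU : U * Uᴴ = 1) (hU' : Uᴴ * U = 1)
    (d : ι → ℝ) : (U * diagonal d * Uᴴ).PosSemidef ↔ ∀ i, 0 ≤ d i := by
  constructor
  · intro h
    have h2 := h.conjTranspose_mul_mul_same U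
    have : Uᴴ * (U * diagonal d * Uᴴ) * U = diagonal d := by
      calc Uᴴ * (U * diagonal d * Uᴴ) * U
          = (Uᴴ * U) * diagonal d * (Uᴴ * U) := by noncomm_ring
        _ = diagonal d := by rw [hU', one_mul, mul_one]
    rw [this] at h2
    exact posSemidef_diagonal_iff.mp h2
  · intro h
    exact (posSemidef_diagonal_iff.mpr h).mul_mul_conjTranspose_same U

lemma smul_one_conj {U : Matrix ι ι ℝ} (hU : U * Uᴴ = 1) (c : ℝ) :
    c • (1 : Matrix ι ι ℝ) = U * diagonal (fun _ => c) * Uᴴ := by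
  rw [← smul_one_eq_diagonal, mul_smul_comm, mul_one, smul_mul_assoc, hU]

lemma conj_sub_conj {U : Matrix ι ι ℝ} (d e : ι → ℝ) :
    U * diagonal d * Uᴴ - U * diagonal e * Uᴴ = U * diagonal (fun i => d i - e i) * Uᴴ := by
  have : diagonal (fun i => d i - e i) = diagonal d - diagonal e := by
    ext i j; by_cases h : i = j <;> simp [diagonal, h]
  rw [this]; noncomm_ring

lemma spectral_real {A : Matrix ι ι ℝ} (hA : A.IsHermitian) :
    A = (hA.eigenvectorUnitary : Matrix ι ι ℝ) * diagonal hA.eigenvalues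
      * (hA.eigenvectorUnitary : Matrix ι ι ℝ)ᴴ := by
  have h := hA.spectral_theorem
  simpa [Matrix.star_eq_conjTranspose] using h

lemma unitary_mul_star {A : Matrix ι ι ℝ} (hA : A.IsHermitian) :
    (hA.eigenvectorUnitary : Matrix ι ι ℝ) * (hA.eigenvectorUnitary : Matrix ι ι ℝ)ᴴ = 1 := by
  have := (Matrix.mem_unitaryGroup_iff).mp hA.eigenvectorUnitary.2
  simpa [Matrix.star_eq_conjTranspose] using this

lemma unitary_star_mul {A : Matrix ι ι ℝ} (hA : A.IsHermitian) :
    (hA.eigenvectorUnitary : Matrix ι ι ℝ)ᴴ * (hA.eigenvectorUnitary : Matrix ι ι ℝ) = 1 := by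
  have := (Matrix.mem_unitaryGroup_iff').mp hA.eigenvectorUnitary.2
  simpa [Matrix.star_eq_conjTranspose] using this

lemma rep_smul_sub_iff {U : Matrix ι ι ℝ} (hU : U * Uᴴ = 1) (hU' : Uᴴ * U = 1)
    {d : ι → ℝ} {A : Matrix ι ι ℝ} (hrep : A = U * diagonal d * Uᴴ) (c : ℝ) :
    (c • (1 : Matrix ι ι ℝ) - A).PosSemidef ↔ ∀ i, d i ≤ c := by
  have key : c • (1 : Matrix ι ι ℝ) - A = U * diagonal (fun i => c - d i) * Uᴴ := by
    rw [hrep, smul_one_conj hU c, conj_sub_conj]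
  rw [key, conj_diag_posSemidef_iff hU hU']
  simp [sub_nonneg]

lemma rep_sub_smul_iff {U : Matrix ι ι ℝ} (hU : U * Uᴴ = 1) (hU' : Uᴴ * U = 1)
    {d : ι → ℝ} {A : Matrix ι ι ℝ} (hrep : A = U * diagonal d * Uᴴ) (c : ℝ) :
    (A - c • (1 : Matrix ι ι ℝ)).PosSemidef ↔ ∀ i, c ≤ d i := by
  have key : A - c • (1 : Matrix ι ι ℝ) = U * diagonal (fun i => d i - c) * Uᴴ := by
    rw [hrep, smul_one_conj hU c, conj_sub_conj]
  rw [key, conj_diag_posSemidef_iff hU hU']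
  simp [sub_nonneg]

lemma rep_inv {U : Matrix ι ι ℝ} (hU : U * Uᴴ = 1) (hU' : Uᴴ * U = 1)
    {d : ι → ℝ} (hd : ∀ i, d i ≠ 0) {A : Matrix ι ι ℝ} (hrep : A = U * diagonal d * Uᴴ) :
    A⁻¹ = U * diagonal (fun i => (d i)⁻¹) * Uᴴ := by
  apply Matrix.inv_eq_left_inv
  rw [hrep]
  have h1 : Uᴴ * (U * diagonal d * Uᴴ) = diagonal d * Uᴴ := by
    rw [← mul_assoc, ← mul_assoc, hU', one_mul]
  rw [mul_assoc, h1, ← mul_assoc, mul_assoc U, diagonal_mul_diagonal]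
  have : (fun i => (d i)⁻¹ * d i) = fun _ => (1 : ℝ) := by
    funext i; exact inv_mul_cancel₀ (hd i)
  rw [this, diagonal_one, mul_one, hU]

variable [Nonempty ι]

lemma le_lam1 {A : Matrix ι ι ℝ} (hA : A.IsHermitian) (i : ι) :
    hA.eigenvalues i ≤ lam1 A := by
  rw [lam1, hA.spectrum_real_eq_range_eigenvalues]
  exact le_csSup (Set.finite_range _).bddAbove (Set.mem_range_self i)

lemma lamn_le {A : Matrix ι ι ℝ} (hA : A.IsHermitian) (i : ι) :
    lamn A ≤ hA.eigenvalues i := by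
  rw [lamn, hA.spectrum_real_eq_range_eigenvalues]
  exact csInf_le (Set.finite_range _).bddBelow (Set.mem_range_self i)

lemma lam1_mem {A : Matrix ι ι ℝ} (hA : A.IsHermitian) :
    ∃ i, hA.eigenvalues i = lam1 A := by
  have h : lam1 A ∈ Set.range hA.eigenvalues := by
    rw [lam1, hA.spectrum_real_eq_range_eigenvalues]
    exact Set.Nonempty.csSup_mem (Set.range_nonempty _) (Set.finite_range _)
  exact h

lemma lamn_mem {A : Matrix ι ι ℝ} (hA : A.IsHermitian) :
    ∃ i, hA.eigenvalues i = lamn A := by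
  have h : lamn A ∈ Set.range hA.eigenvalues := by
    rw [lamn, hA.spectrum_real_eq_range_eigenvalues]
    exact Set.Nonempty.csInf_mem (Set.range_nonempty _) (Set.finite_range _)
  exact h

end Aux

theorem stmt_4 {n : ℕ} (hn : 0 < n) (B K : Matrix (Fin n) (Fin n) ℝ)
    (hB : B.PosDef) (hK : K.PosSemidef) :
    condNum (B⁻¹ + K) ≤ condNum B * (1 + lamn B * lam1 K) ∧
      condNum B * (1 + lamn B * lam1 K) = condNum B + lam1 B * lam1 K := by
  haveI : Nonempty (Fin n) := ⟨⟨0, hn⟩⟩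
  set S := B⁻¹ + K with hSdef
  have hBinv : (B⁻¹).PosDef := hB.inv
  have hS : S.PosDef := hBinv.add_posSemidef hK
  -- basic positivity facts
  have hlamnB_pos : 0 < lamn B := by
    obtain ⟨i, hi⟩ := lamn_mem hB.1
    exact hi ▸ hB.eigenvalues_pos i
  have hlamnB_le_lam1B : lamn B ≤ lam1 B := by
    obtain ⟨i, hi⟩ := lamn_mem hB.1
    exact hi ▸ le_lam1 hB.1 i
  have hlam1B_pos : 0 < lam1 B := lt_of_lt_of_le hlamnB_pos hlamnB_le_lam1B
  have hlam1K_nonneg : 0 ≤ lam1 K := by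
    obtain ⟨i, hi⟩ := lam1_mem hK.1
    exact hi ▸ hK.eigenvalues_nonneg i
  have hlamnS_pos : 0 < lamn S := by
    obtain ⟨i, hi⟩ := lamn_mem hS.1
    exact hi ▸ hS.eigenvalues_pos i
  -- upper bound for lam1 S
  have hup : ((lamn B)⁻¹ + lam1 K) • (1 : Matrix (Fin n) (Fin n) ℝ) - S =
      ((lamn B)⁻¹ • (1 : Matrix (Fin n) (Fin n) ℝ) - B⁻¹)
        + (lam1 K • (1 : Matrix (Fin n) (Fin n) ℝ) - K) := by
    rw [hSdef, add_smul]; abel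
  have hreps := rep_inv (unitary_mul_star hB.1) (unitary_star_mul hB.1)
    (fun i => (hB.eigenvalues_pos i).ne') (spectral_real hB.1)
  have hBinv_up : ((lamn B)⁻¹ • (1 : Matrix (Fin n) (Fin n) ℝ) - B⁻¹).PosSemidef := by
    rw [rep_smul_sub_iff (unitary_mul_star hB.1) (unitary_star_mul hB.1) hreps]
    intro i
    exact inv_anti₀ hlamnB_pos (lamn_le hB.1 i)
  have hK_up : (lam1 K • (1 : Matrix (Fin n) (Fin n) ℝ) - K).PosSemidef :=
    (rep_smul_sub_iff (unitary_mul_star hK.1) (unitary_star_mul hK.1) (spectral_real hK.1) (lam1 K)).mpr (le_lam1 hK.1)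
  have hS_up : (((lamn B)⁻¹ + lam1 K) • (1 : Matrix (Fin n) (Fin n) ℝ) - S).PosSemidef := by
    rw [hup]; exact hBinv_up.add hK_up
  have hlam1S : lam1 S ≤ (lamn B)⁻¹ + lam1 K := by
    rw [lam1, hS.1.spectrum_real_eq_range_eigenvalues]
    apply csSup_le (Set.range_nonempty _)
    rintro x ⟨i, rfl⟩
    exact (rep_smul_sub_iff (unitary_mul_star hS.1) (unitary_star_mul hS.1) (spectral_real hS.1) _).mp hS_up i
  -- lower bound for lamn S
  have hBinv_low : (B⁻¹ - (lam1 B)⁻¹ • (1 : Matrix (Fin n) (Fin n) ℝ)).PosSemidef := by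
    rw [rep_sub_smul_iff (unitary_mul_star hB.1) (unitary_star_mul hB.1) hreps]
    intro i
    exact inv_anti₀ (hB.eigenvalues_pos i) (le_lam1 hB.1 i)
  have hS_low : (S - (lam1 B)⁻¹ • (1 : Matrix (Fin n) (Fin n) ℝ)).PosSemidef := by
    have : S - (lam1 B)⁻¹ • (1 : Matrix (Fin n) (Fin n) ℝ)
        = (B⁻¹ - (lam1 B)⁻¹ • (1 : Matrix (Fin n) (Fin n) ℝ)) + K := by
      rw [hSdef]; abel
    rw [this]; exact hBinv_low.add hK
  have hlamnS : (lam1 B)⁻¹ ≤ lamn S := by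
    rw [lamn, hS.1.spectrum_real_eq_range_eigenvalues]
    apply le_csInf (Set.range_nonempty _)
    rintro x ⟨i, rfl⟩
    exact (rep_sub_smul_iff (unitary_mul_star hS.1) (unitary_star_mul hS.1) (spectral_real hS.1) _).mp hS_low i
  -- conclude
  have hlam1S_nonneg : 0 ≤ lam1 S := by
    obtain ⟨i, hi⟩ := lam1_mem hS.1
    exact hi ▸ (hS.posSemidef.eigenvalues_nonneg i)
  have heq : condNum B * (1 + lamn B * lam1 K) = condNum B + lam1 B * lam1 K := by
    have h0 : lamn B ≠ 0 := hlamnB_pos.ne'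
    rw [condNum]
    field_simp
  constructor
  · rw [heq]
    have h1 : condNum S ≤ ((lamn B)⁻¹ + lam1 K) / (lam1 B)⁻¹ := by
      rw [condNum]
      exact div_le_div₀ (by positivity) hlam1S (by positivity) hlamnS
    have h2 : ((lamn B)⁻¹ + lam1 K) / (lam1 B)⁻¹ = condNum B + lam1 B * lam1 K := by
      rw [condNum]
      have h0 : lamn B ≠ 0 := hlamnB_pos.ne'
      have h0' : lam1 B ≠ 0 := hlam1B_pos.ne'
      field_simp
    rw [← h2]
    exact h1
  · exact heq
end

section
/- Let B₀ = UᵀU be symmetric positive definite (U ∈ ℝ^{n×n}), P = XXᵀ with X ∈ ℝ^{n×m}, K ∈ ℝ^{n×n} symmetric positive semidefinite and singular (λₙ(K)=0), β ∈ [0,1], U_h = [√(1-β)U, √βX], and S = I_{n+m} + U_hᵀKU_h. Then κ(S) ≤ 1 + √((β-β²)λ₁(B₀)λ₁(P)λ₁(K)²) + max((1-β)λ₁(B₀)λ₁(K), βλ₁(P)λ₁(K)). -/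
/-!
Since `U_h` has `n` rows and `n + m > n` columns, `U_hᵀ K U_h` is singular and positive
semidefinite, so its smallest eigenvalue is `0` and `κ(S) = 1 + λ₁(U_hᵀ K U_h)`. For positive
semidefinite matrices `λ₁` is the spectral norm, hence
`λ₁(U_hᵀ K U_h) ≤ λ₁(K) ‖U_h‖² ≤ λ₁(K) ((1 - β) ‖U‖² + β ‖X‖²) = x + y` with
`x = (1 - β) λ₁(B₀) λ₁(K)` and `y = β λ₁(P) λ₁(K)`. Finally `x + y ≤ √(x y) + max x y`,
because `min x y ≤ √(x y)`.
-/

open Matrix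

open scoped Matrix.Norms.L2Operator Pointwise

namespace Matrix

section L2OpNorm

variable {𝕜 m n l : Type*} [RCLike 𝕜] [Fintype m] [Fintype n] [Fintype l]
  [DecidableEq m] [DecidableEq n] [DecidableEq l]

lemma l2_opNorm_mul_conjTranspose_self (A : Matrix m n 𝕜) : ‖A * Aᴴ‖ = ‖A‖ * ‖A‖ := by
  simpa [l2_opNorm_conjTranspose] using l2_opNorm_conjTranspose_mul_self Aᴴ

lemma l2_opNorm_fromCols_mul_self_le (A : Matrix m n 𝕜) (B : Matrix m l 𝕜) :
    ‖fromCols A B‖ * ‖fromCols A B‖ ≤ ‖A‖ * ‖A‖ + ‖B‖ * ‖B‖ := by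
  rw [← l2_opNorm_mul_conjTranspose_self, conjTranspose_fromCols_eq_fromRows_conjTranspose,
    fromCols_mul_fromRows, ← l2_opNorm_mul_conjTranspose_self,
    ← l2_opNorm_mul_conjTranspose_self]
  exact norm_add_le _ _

lemma IsHermitian.l2_opNorm_eq {A : Matrix n n 𝕜} (hA : A.IsHermitian) :
    ‖A‖ = ‖hA.eigenvalues‖ := by
  conv_lhs => rw [hA.spectral_theorem, Unitary.conjStarAlgAut_apply]
  rw [CStarRing.norm_mul_mem_unitary _ (Unitary.star_mem hA.eigenvectorUnitary.2),
    CStarRing.norm_coe_unitary_mul, l2_opNorm_diagonal]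
  simp [Pi.norm_def]

lemma l2_opNorm_conjTranspose_mul_mul_le (K : Matrix m m 𝕜) (V : Matrix m n 𝕜) :
    ‖Vᴴ * K * V‖ ≤ ‖K‖ * (‖V‖ * ‖V‖) := by
  calc ‖Vᴴ * K * V‖ ≤ ‖Vᴴ‖ * ‖K‖ * ‖V‖ :=
        (l2_opNorm_mul _ _).trans (mul_le_mul_of_nonneg_right (l2_opNorm_mul _ _) (norm_nonneg _))
    _ = ‖K‖ * (‖V‖ * ‖V‖) := by rw [l2_opNorm_conjTranspose]; ring

end L2OpNorm

lemma not_isUnit_mul_of_card_lt {R m n : Type*} [CommRing R] [StrongRankCondition R]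
    [Fintype m] [Fintype n] [DecidableEq n] (A : Matrix n m R) (B : Matrix m n R)
    (hcard : Fintype.card m < Fintype.card n) : ¬IsUnit (A * B) := fun hAB =>
  ((rank_of_isUnit _ hAB).symm.trans_le
    ((rank_mul_le_right A B).trans (rank_le_card_height B))).not_gt hcard

end Matrix

lemma spectrum_one_add {R A : Type*} [CommRing R] [Ring A] [Algebra R A] (a : A) :
    spectrum R (1 + a) = {(1 : R)} + spectrum R a := by
  rw [spectrum.singleton_add_eq, map_one]

section Spectrum

variable {ι : Type*} [Fintype ι] [DecidableEq ι]

lemma lam1_one_add {A : Matrix ι ι ℝ} (h : (spectrum ℝ A).Nonempty) :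
    lam1 (1 + A) = 1 + lam1 A := by
  rw [lam1, spectrum_one_add, csSup_add (Set.singleton_nonempty 1) bddAbove_singleton h
    (Matrix.finite_real_spectrum).bddAbove, csSup_singleton, lam1]

lemma lamn_one_add {A : Matrix ι ι ℝ} (h : (spectrum ℝ A).Nonempty) :
    lamn (1 + A) = 1 + lamn A := by
  rw [lamn, spectrum_one_add, csInf_add (Set.singleton_nonempty 1) bddBelow_singleton h
    (Matrix.finite_real_spectrum).bddBelow, csInf_singleton, lamn]

lemma lam1_le_l2_opNorm (A : Matrix ι ι ℝ) : lam1 A ≤ ‖A‖ := by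
  refine Real.sSup_le (fun μ hμ => ?_) (norm_nonneg A)
  have : Nontrivial (Matrix ι ι ℝ) := (subsingleton_or_nontrivial _).resolve_left fun _ => by
    simp [spectrum.of_subsingleton] at hμ
  exact (le_abs_self μ).trans (spectrum.norm_le_norm_of_mem hμ)

namespace Matrix.PosSemidef

variable {A : Matrix ι ι ℝ} (hA : A.PosSemidef)
include hA

lemma nonneg_of_mem_spectrum {μ : ℝ} (hμ : μ ∈ spectrum ℝ A) : 0 ≤ μ := by
  rw [hA.1.spectrum_real_eq_range_eigenvalues] at hμ
  obtain ⟨i, rfl⟩ := hμ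
  exact hA.eigenvalues_nonneg i

lemma lam1_eq_l2_opNorm : lam1 A = ‖A‖ := by
  refine (lam1_le_l2_opNorm A).antisymm ?_
  have hnonneg : 0 ≤ lam1 A := Real.sSup_nonneg fun _ => hA.nonneg_of_mem_spectrum
  refine hA.1.l2_opNorm_eq ▸ (pi_norm_le_iff_of_nonneg hnonneg).mpr fun i => ?_
  rw [Real.norm_of_nonneg (hA.eigenvalues_nonneg i)]
  exact le_csSup (Matrix.finite_real_spectrum).bddAbove (hA.1.eigenvalues_mem_spectrum_real i)

lemma lamn_eq_zero (hsing : ¬IsUnit A) : lamn A = 0 :=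
  IsLeast.csInf_eq ⟨(spectrum.zero_mem_iff ℝ).mpr hsing, fun _ => hA.nonneg_of_mem_spectrum⟩

lemma condNum_one_add (hsing : ¬IsUnit A) : condNum (1 + A) = 1 + lam1 A := by
  have hne : (spectrum ℝ A).Nonempty := ⟨0, (spectrum.zero_mem_iff ℝ).mpr hsing⟩
  rw [condNum, lam1_one_add hne, lamn_one_add hne, hA.lamn_eq_zero hsing, add_zero, div_one]

end Matrix.PosSemidef

end Spectrum

lemma add_le_sqrt_mul_add_max {x y : ℝ} (hx : 0 ≤ x) (hy : 0 ≤ y) :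
    x + y ≤ √(x * y) + max x y := by
  have hmin : min x y ≤ √(x * y) :=
    Real.le_sqrt_of_sq_le (by nlinarith [min_le_left x y, min_le_right x y, le_min hx hy])
  linarith [min_add_max x y]

theorem stmt_15_general {n m : ℕ} (hm : 0 < m) (U K : Matrix (Fin n) (Fin n) ℝ)
    (X : Matrix (Fin n) (Fin m) ℝ) (B₀ P : Matrix (Fin n) (Fin n) ℝ)
    (hB₀def : B₀ = Uᵀ * U) (hPdef : P = X * Xᵀ)
    (hK : K.PosSemidef)
    (β : ℝ) (hβ0 : 0 ≤ β) (hβ1 : β ≤ 1) :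
    condNum (1 + (fromCols (Real.sqrt (1 - β) • U) (Real.sqrt β • X))ᵀ * K *
          fromCols (Real.sqrt (1 - β) • U) (Real.sqrt β • X))
      ≤ 1 + Real.sqrt ((β - β ^ 2) * lam1 B₀ * lam1 P * (lam1 K) ^ 2) +
          max ((1 - β) * lam1 B₀ * lam1 K) (β * lam1 P * lam1 K) := by
  set V := fromCols (√(1 - β) • U) (√β • X)
  rw [← conjTranspose_eq_transpose_of_trivial] at hB₀def hPdef ⊢
  have hsing : ¬IsUnit (Vᴴ * K * V) :=
    not_isUnit_mul_of_card_lt _ V (by simp only [Fintype.card_sum, Fintype.card_fin]; omega)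
  rw [(hK.conjTranspose_mul_mul_same V).condNum_one_add hsing, add_assoc]
  gcongr 1 + ?_
  have hB₀ : lam1 B₀ = ‖U‖ * ‖U‖ := by
    rw [hB₀def, (posSemidef_conjTranspose_mul_self U).lam1_eq_l2_opNorm,
      l2_opNorm_conjTranspose_mul_self]
  have hP : lam1 P = ‖X‖ * ‖X‖ := by
    rw [hPdef, (posSemidef_self_mul_conjTranspose X).lam1_eq_l2_opNorm,
      l2_opNorm_mul_conjTranspose_self]
  have hV : ‖V‖ * ‖V‖ ≤ (1 - β) * lam1 B₀ + β * lam1 P := by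
    refine (l2_opNorm_fromCols_mul_self_le _ _).trans_eq ?_
    rw [hB₀, hP, norm_smul, norm_smul, Real.norm_of_nonneg (Real.sqrt_nonneg _),
      Real.norm_of_nonneg (Real.sqrt_nonneg _)]
    have h1 := Real.mul_self_sqrt (sub_nonneg.mpr hβ1)
    have h2 := Real.mul_self_sqrt hβ0
    linear_combination ‖U‖ * ‖U‖ * h1 + ‖X‖ * ‖X‖ * h2
  have hK₀ : 0 ≤ lam1 K := hK.lam1_eq_l2_opNorm ▸ norm_nonneg K
  have hx : 0 ≤ (1 - β) * lam1 B₀ * lam1 K := by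
    rw [hB₀]; have := sub_nonneg.mpr hβ1; positivity
  have hy : 0 ≤ β * lam1 P * lam1 K := by rw [hP]; positivity
  calc lam1 (Vᴴ * K * V) ≤ lam1 K * (‖V‖ * ‖V‖) :=
        hK.lam1_eq_l2_opNorm ▸ (lam1_le_l2_opNorm _).trans (l2_opNorm_conjTranspose_mul_mul_le K V)
    _ ≤ lam1 K * ((1 - β) * lam1 B₀ + β * lam1 P) := by gcongr
    _ = (1 - β) * lam1 B₀ * lam1 K + β * lam1 P * lam1 K := by ring
    _ ≤ _ := by convert add_le_sqrt_mul_add_max hx hy using 3; ring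

theorem stmt_15 {n m : ℕ} (hm : 0 < m) (U K : Matrix (Fin n) (Fin n) ℝ)
    (X : Matrix (Fin n) (Fin m) ℝ) (B₀ P : Matrix (Fin n) (Fin n) ℝ)
    (hB₀def : B₀ = Uᵀ * U) (hB₀ : B₀.PosDef) (hPdef : P = X * Xᵀ)
    (hK : K.PosSemidef) (hKsing : lamn K = 0)
    (β : ℝ) (hβ0 : 0 ≤ β) (hβ1 : β ≤ 1) :
    condNum (1 + (fromCols (Real.sqrt (1 - β) • U) (Real.sqrt β • X))ᵀ * K *
          fromCols (Real.sqrt (1 - β) • U) (Real.sqrt β • X))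
      ≤ 1 + Real.sqrt ((β - β ^ 2) * lam1 B₀ * lam1 P * (lam1 K) ^ 2) +
          max ((1 - β) * lam1 B₀ * lam1 K) (β * lam1 P * lam1 K) :=
  stmt_15_general hm U K X B₀ P hB₀def hPdef hK β hβ0 hβ1
end

section
/- Let B₀ ∈ ℝ^{n×n} be symmetric positive definite, P symmetric positive semidefinite with λₙ(P) = 0, H ∈ ℝ^{p×n} a selection matrix (each row one unit entry, distinct columns), R = σ_R² I_p, β ∈ [0,1), B = (1-β)B₀ + βP, and S = B⁻¹ + HᵀR⁻¹H. Then κ(S) ≤ κ(B₀)(1 + βλ₁(P)/((1-β)λ₁(B₀))) + ((1-β)λ₁(B₀) + βλ₁(P))/σ_R². -/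
open Matrix

/-!
For `S = B⁻¹ + M` with `B ≻ 0` and `M ⪰ 0`, Weyl's inequalities and the spectral mapping
`σ(B⁻¹) = σ(B)⁻¹` give `lam1 S ≤ (lamn B)⁻¹ + lam1 M` and `(lam1 B)⁻¹ ≤ lamn S`, hence
`κ(S) ≤ κ(B) + lam1 B · lam1 M`. For `B = (1-β) B₀ + β P` the same inequalities give
`lam1 B ≤ (1-β) lam1 B₀ + β lam1 P` and `(1-β) lamn B₀ ≤ lamn B`, which bounds `κ(B)` by
`Γ_κ(B)`. A selection matrix only drops coordinates, so `‖Hx‖ ≤ ‖x‖` and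
`lam1 (Hᵀ R⁻¹ H) ≤ σ_R⁻²`. All eigenvalue bounds go through the Rayleigh characterisation
`lam1 A ≤ c ↔ c • 1 - A ⪰ 0`.
-/

section Rayleigh

variable {ι : Type*} [Fintype ι] [DecidableEq ι] {A B M : Matrix ι ι ℝ}

lemma Matrix.IsHermitian.spectrum_real_nonempty [Nonempty ι] (hA : A.IsHermitian) :
    (spectrum ℝ A).Nonempty := by
  rw [hA.spectrum_real_eq_range_eigenvalues]
  exact Set.range_nonempty _

lemma lam1_mem_spectrum [Nonempty ι] (hA : A.IsHermitian) : lam1 A ∈ spectrum ℝ A :=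
  hA.spectrum_real_nonempty.csSup_mem A.finite_real_spectrum

lemma lamn_mem_spectrum [Nonempty ι] (hA : A.IsHermitian) : lamn A ∈ spectrum ℝ A :=
  hA.spectrum_real_nonempty.csInf_mem A.finite_real_spectrum

lemma Matrix.PosDef.pos_of_mem_spectrum (hA : A.PosDef) {μ : ℝ} (hμ : μ ∈ spectrum ℝ A) :
    0 < μ := by
  obtain ⟨i, rfl⟩ := hA.1.spectrum_real_eq_range_eigenvalues ▸ hμ
  exact hA.eigenvalues_pos i

lemma Matrix.PosDef.lam1_pos [Nonempty ι] (hA : A.PosDef) : 0 < lam1 A :=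
  hA.pos_of_mem_spectrum (lam1_mem_spectrum hA.1)

lemma Matrix.PosDef.lamn_pos [Nonempty ι] (hA : A.PosDef) : 0 < lamn A :=
  hA.pos_of_mem_spectrum (lamn_mem_spectrum hA.1)

lemma Matrix.PosSemidef.lam1_nonneg [Nonempty ι] (hA : A.PosSemidef) : 0 ≤ lam1 A :=
  (posSemidef_iff_isHermitian_and_spectrum_nonneg.1 hA).2 (lam1_mem_spectrum hA.1)

lemma dotProduct_smul_one_sub_mulVec (c : ℝ) (x : ι → ℝ) :
    x ⬝ᵥ (c • (1 : Matrix ι ι ℝ) - A) *ᵥ x = c * (x ⬝ᵥ x) - x ⬝ᵥ A *ᵥ x := by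
  rw [sub_mulVec, smul_mulVec, one_mulVec, dotProduct_sub, dotProduct_smul, smul_eq_mul]

lemma lam1_le_iff [Nonempty ι] (hA : A.IsHermitian) {c : ℝ} :
    lam1 A ≤ c ↔ ∀ x, x ⬝ᵥ A *ᵥ x ≤ c * (x ⬝ᵥ x) := by
  have hsub : (c • (1 : Matrix ι ι ℝ) - A).IsHermitian :=
    (isHermitian_one.smul (IsSelfAdjoint.all c)).sub hA
  calc lam1 A ≤ c ↔ ∀ μ ∈ spectrum ℝ A, μ ≤ c :=
        csSup_le_iff A.finite_real_spectrum.bddAbove hA.spectrum_real_nonempty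
    _ ↔ spectrum ℝ (c • (1 : Matrix ι ι ℝ) - A) ⊆ {a | 0 ≤ a} := by
        simp [← Algebra.algebraMap_eq_smul_one, ← spectrum.singleton_sub_eq, Set.subset_def]
    _ ↔ (c • (1 : Matrix ι ι ℝ) - A).PosSemidef := by
        rw [posSemidef_iff_isHermitian_and_spectrum_nonneg, and_iff_right hsub]
    _ ↔ ∀ x, x ⬝ᵥ A *ᵥ x ≤ c * (x ⬝ᵥ x) := by
        rw [posSemidef_iff_dotProduct_mulVec, and_iff_right hsub]
        simp only [star_trivial, dotProduct_smul_one_sub_mulVec, sub_nonneg]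

lemma lam1_neg (A : Matrix ι ι ℝ) : lam1 (-A) = -lamn A := by
  rw [lam1, ← spectrum.neg_eq, Real.sSup_neg, lamn]

lemma le_lamn_iff [Nonempty ι] (hA : A.IsHermitian) {c : ℝ} :
    c ≤ lamn A ↔ ∀ x, c * (x ⬝ᵥ x) ≤ x ⬝ᵥ A *ᵥ x := by
  rw [← neg_le_neg_iff, ← lam1_neg, lam1_le_iff hA.neg]
  simp [neg_mulVec, dotProduct_neg]

lemma lam1_add_le [Nonempty ι] (hA : A.IsHermitian) (hB : B.IsHermitian) :
    lam1 (A + B) ≤ lam1 A + lam1 B :=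
  (lam1_le_iff (hA.add hB)).2 fun x => by
    rw [add_mulVec, dotProduct_add, add_mul]
    exact add_le_add ((lam1_le_iff hA).1 le_rfl x) ((lam1_le_iff hB).1 le_rfl x)

lemma lamn_le_lamn_add [Nonempty ι] (hA : A.IsHermitian) (hM : M.PosSemidef) :
    lamn A ≤ lamn (A + M) :=
  (le_lamn_iff (hA.add hM.1)).2 fun x => by
    rw [add_mulVec, dotProduct_add]
    have := hM.dotProduct_mulVec_nonneg x
    rw [star_trivial] at this
    linarith [(le_lamn_iff hA).1 le_rfl x]

lemma lam1_smul_le [Nonempty ι] (hA : A.IsHermitian) {c : ℝ} (hc : 0 ≤ c) :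
    lam1 (c • A) ≤ c * lam1 A :=
  (lam1_le_iff (hA.smul (IsSelfAdjoint.all c))).2 fun x => by
    rw [smul_mulVec, dotProduct_smul, smul_eq_mul, mul_assoc]
    exact mul_le_mul_of_nonneg_left ((lam1_le_iff hA).1 le_rfl x) hc

lemma mul_lamn_le_lamn_smul [Nonempty ι] (hA : A.IsHermitian) {c : ℝ} (hc : 0 ≤ c) :
    c * lamn A ≤ lamn (c • A) :=
  (le_lamn_iff (hA.smul (IsSelfAdjoint.all c))).2 fun x => by
    rw [smul_mulVec, dotProduct_smul, smul_eq_mul, mul_assoc]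
    exact mul_le_mul_of_nonneg_left ((le_lamn_iff hA).1 le_rfl x) hc

lemma spectrum_real_nonsing_inv (hA : IsUnit A) : spectrum ℝ A⁻¹ = (spectrum ℝ A)⁻¹ := by
  obtain ⟨u, rfl⟩ := hA
  rw [← coe_units_inv, spectrum.map_inv]

lemma Matrix.PosDef.lam1_inv_le [Nonempty ι] (hA : A.PosDef) : lam1 A⁻¹ ≤ (lamn A)⁻¹ := by
  have hmem : (lam1 A⁻¹)⁻¹ ∈ spectrum ℝ A := by
    simpa [spectrum_real_nonsing_inv hA.isUnit] using lam1_mem_spectrum hA.inv.1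
  exact (le_inv_comm₀ hA.inv.lam1_pos hA.lamn_pos).2
    (csInf_le A.finite_real_spectrum.bddBelow hmem)

lemma Matrix.PosDef.inv_lam1_le_lamn_inv [Nonempty ι] (hA : A.PosDef) :
    (lam1 A)⁻¹ ≤ lamn A⁻¹ := by
  have hmem : (lamn A⁻¹)⁻¹ ∈ spectrum ℝ A := by
    simpa [spectrum_real_nonsing_inv hA.isUnit] using lamn_mem_spectrum hA.inv.1
  exact (inv_le_comm₀ hA.lam1_pos hA.inv.lamn_pos).2
    (le_csSup A.finite_real_spectrum.bddAbove hmem)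

end Rayleigh

section ConditionNumber

variable {ι : Type*} [Fintype ι] [DecidableEq ι] [Nonempty ι]

theorem condNum_inv_add_le {B M : Matrix ι ι ℝ} (hB : B.PosDef) (hM : M.PosSemidef) :
    condNum (B⁻¹ + M) ≤ condNum B + lam1 B * lam1 M := by
  have hS : (B⁻¹ + M).PosDef := hB.inv.add_posSemidef hM
  have hlam1 : lam1 (B⁻¹ + M) ≤ (lamn B)⁻¹ + lam1 M :=
    (lam1_add_le hB.inv.1 hM.1).trans (add_le_add_left hB.lam1_inv_le _)
  have hlamn : (lam1 B)⁻¹ ≤ lamn (B⁻¹ + M) :=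
    hB.inv_lam1_le_lamn_inv.trans (lamn_le_lamn_add hB.inv.1 hM)
  have := hB.lamn_pos
  calc condNum (B⁻¹ + M) ≤ ((lamn B)⁻¹ + lam1 M) / (lam1 B)⁻¹ :=
        div_le_div₀ (hS.lam1_pos.le.trans hlam1) hlam1 (inv_pos.2 hB.lam1_pos) hlamn
    _ = condNum B + lam1 B * lam1 M := by
        rw [condNum]
        field_simp

lemma lam1_smul_add_smul_le {A B : Matrix ι ι ℝ} (hA : A.IsHermitian) (hB : B.IsHermitian)
    {a b : ℝ} (ha : 0 ≤ a) (hb : 0 ≤ b) : lam1 (a • A + b • B) ≤ a * lam1 A + b * lam1 B :=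
  (lam1_add_le (hA.smul (IsSelfAdjoint.all a)) (hB.smul (IsSelfAdjoint.all b))).trans
    (add_le_add (lam1_smul_le hA ha) (lam1_smul_le hB hb))

theorem condNum_smul_add_smul_le {B₀ P : Matrix ι ι ℝ} (hB₀ : B₀.PosDef) (hP : P.PosSemidef)
    {β : ℝ} (hβ0 : 0 ≤ β) (hβ1 : β < 1) :
    condNum ((1 - β) • B₀ + β • P) ≤ condNum B₀ * (1 + β * lam1 P / ((1 - β) * lam1 B₀)) := by
  have h1β : 0 < 1 - β := by linarith
  have hB : ((1 - β) • B₀ + β • P).PosDef := (hB₀.smul h1β).add_posSemidef (hP.smul hβ0)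
  have hlam1 := lam1_smul_add_smul_le hB₀.1 hP.1 h1β.le hβ0
  have hlamn : (1 - β) * lamn B₀ ≤ lamn ((1 - β) • B₀ + β • P) :=
    (mul_lamn_le_lamn_smul hB₀.1 h1β.le).trans
      (lamn_le_lamn_add (hB₀.1.smul (IsSelfAdjoint.all _)) (hP.smul hβ0))
  have := hB₀.lam1_pos
  calc condNum ((1 - β) • B₀ + β • P)
        ≤ ((1 - β) * lam1 B₀ + β * lam1 P) / ((1 - β) * lamn B₀) :=
        div_le_div₀ (hB.lam1_pos.le.trans hlam1) hlam1 (mul_pos h1β hB₀.lamn_pos) hlamn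
    _ = condNum B₀ * (1 + β * lam1 P / ((1 - β) * lam1 B₀)) := by
        rw [condNum]
        field_simp

end ConditionNumber

section Selection

variable {κ ι : Type*} [Fintype ι]

lemma dotProduct_comp_self_le [Fintype κ] {f : κ → ι} (hf : f.Injective) (x : ι → ℝ) :
    (x ∘ f) ⬝ᵥ (x ∘ f) ≤ x ⬝ᵥ x := by
  simp only [dotProduct, Function.comp_apply]
  exact (Finset.sum_map Finset.univ ⟨f, hf⟩ fun j => x j * x j).symm.trans_le
    (Finset.sum_le_univ_sum_of_nonneg fun j => mul_self_nonneg (x j))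

lemma posSemidef_transpose_mul_self [Fintype κ] (A : Matrix κ ι ℝ) : (Aᵀ * A).PosSemidef := by
  simpa using posSemidef_conjTranspose_mul_self A

variable [DecidableEq ι]

def selectionMatrix (f : κ → ι) : Matrix κ ι ℝ :=
  of fun i j => if f i = j then 1 else 0

lemma selectionMatrix_mulVec (f : κ → ι) (x : ι → ℝ) : selectionMatrix f *ᵥ x = x ∘ f := by
  ext i
  simp [selectionMatrix, mulVec, dotProduct]

lemma lam1_transpose_mul_selectionMatrix_le_one [Fintype κ] [Nonempty ι] {f : κ → ι}
    (hf : f.Injective) : lam1 ((selectionMatrix f)ᵀ * selectionMatrix f) ≤ 1 :=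
  (lam1_le_iff (posSemidef_transpose_mul_self _).1).2 fun x => by
    rw [← mulVec_mulVec, dotProduct_mulVec, vecMul_transpose, selectionMatrix_mulVec, one_mul]
    exact dotProduct_comp_self_le hf x

end Selection

lemma transpose_mul_smul_one_inv_mul {κ ι : Type*} [Fintype κ] [DecidableEq κ]
    (H : Matrix κ ι ℝ) {r : ℝ} (hr : r ≠ 0) :
    Hᵀ * (r • (1 : Matrix κ κ ℝ))⁻¹ * H = r⁻¹ • (Hᵀ * H) := by
  have hinv : (r • (1 : Matrix κ κ ℝ))⁻¹ = r⁻¹ • 1 :=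
    inv_eq_left_inv (by rw [smul_mul_smul_comm, inv_mul_cancel₀ hr, one_mul, one_smul])
  rw [hinv, Matrix.mul_smul, Matrix.mul_one, Matrix.smul_mul]

theorem stmt_19_general {n p : ℕ} (hn : 0 < n)
    (B₀ P : Matrix (Fin n) (Fin n) ℝ)
    (hB₀ : B₀.PosDef) (hP : P.PosSemidef)
    (H : Matrix (Fin p) (Fin n) ℝ) (f : Fin p → Fin n) (hf : Function.Injective f)
    (hH : H = Matrix.of fun i j => if f i = j then (1 : ℝ) else 0)
    (σR : ℝ) (hσ : 0 < σR) (β : ℝ) (hβ0 : 0 ≤ β) (hβ1 : β < 1) :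
    condNum (((1 - β) • B₀ + β • P)⁻¹ +
        Hᵀ * ((σR ^ 2) • (1 : Matrix (Fin p) (Fin p) ℝ))⁻¹ * H)
      ≤ condNum B₀ * (1 + β * lam1 P / ((1 - β) * lam1 B₀)) +
          ((1 - β) * lam1 B₀ + β * lam1 P) / σR ^ 2 := by
  have : Nonempty (Fin n) := Fin.pos_iff_nonempty.1 hn
  have hσ2 : 0 < σR ^ 2 := by positivity
  have hB : ((1 - β) • B₀ + β • P).PosDef :=
    (hB₀.smul (sub_pos.2 hβ1)).add_posSemidef (hP.smul hβ0)
  have hlam1B := lam1_smul_add_smul_le hB₀.1 hP.1 (sub_nonneg.2 hβ1.le) hβ0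
  have hHtH : lam1 (Hᵀ * H) ≤ 1 := hH ▸ lam1_transpose_mul_selectionMatrix_le_one hf
  have hM : ((σR ^ 2)⁻¹ • (Hᵀ * H)).PosSemidef :=
    (posSemidef_transpose_mul_self H).smul (inv_nonneg.2 hσ2.le)
  have hlam1M : lam1 ((σR ^ 2)⁻¹ • (Hᵀ * H)) ≤ (σR ^ 2)⁻¹ :=
    (lam1_smul_le (posSemidef_transpose_mul_self H).1 (inv_nonneg.2 hσ2.le)).trans
      (mul_le_of_le_one_right (inv_nonneg.2 hσ2.le) hHtH)
  rw [transpose_mul_smul_one_inv_mul H hσ2.ne', div_eq_mul_inv _ (σR ^ 2)]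
  exact (condNum_inv_add_le hB hM).trans <|
    add_le_add (condNum_smul_add_smul_le hB₀ hP hβ0 hβ1)
      (mul_le_mul hlam1B hlam1M hM.lam1_nonneg (hB.lam1_pos.le.trans hlam1B))

theorem stmt_19 {n p : ℕ} (hn : 0 < n) (hp : 0 < p)
    (B₀ P : Matrix (Fin n) (Fin n) ℝ)
    (hB₀ : B₀.PosDef) (hP : P.PosSemidef) (hPsing : lamn P = 0)
    (H : Matrix (Fin p) (Fin n) ℝ) (f : Fin p → Fin n) (hf : Function.Injective f)
    (hH : H = Matrix.of fun i j => if f i = j then (1 : ℝ) else 0)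
    (σR : ℝ) (hσ : 0 < σR) (β : ℝ) (hβ0 : 0 ≤ β) (hβ1 : β < 1) :
    condNum (((1 - β) • B₀ + β • P)⁻¹ +
        Hᵀ * ((σR ^ 2) • (1 : Matrix (Fin p) (Fin p) ℝ))⁻¹ * H)
      ≤ condNum B₀ * (1 + β * lam1 P / ((1 - β) * lam1 B₀)) +
          ((1 - β) * lam1 B₀ + β * lam1 P) / σR ^ 2 :=
  stmt_19_general hn B₀ P hB₀ hP H f hf hH σR hσ β hβ0 hβ1
end
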